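/- arXiv:1502.04386 — 2 statements merged into one kernel-verified Lean document; each statement's English description precedes it below -/
import Mathlib

section
/- In (Q(t)*/Q(t)*²)², the element (t(t+1), t(t-1)) is not in the F₂-span of (t, t(t-1)(t+3)) and (t(t+1)(t-3), t). Equivalently, none of the four elements (t(t+1), t(t-1)), (t(t+1), t(t-1))·(t, t(t-1)(t+3)), (t(t+1), t(t-1))·(t(t+1)(t-3), t), and the product of all three is a pair of squares in Q(t)*. -/
open Polynomial

lemma not_sq_of_neg_eval (p : Polynomial ℚ) (a : ℚ) (h : p.eval a < 0) :
    ¬ IsSquare (algebraMap (Polynomial ℚ) (RatFunc ℚ) p) := by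
  rintro ⟨r, hr⟩
  have hd : algebraMap (Polynomial ℚ) (RatFunc ℚ) r.denom ≠ 0 :=
    RatFunc.algebraMap_ne_zero r.denom_ne_zero
  have hnum : algebraMap (Polynomial ℚ) (RatFunc ℚ) r.num
      = r * algebraMap (Polynomial ℚ) (RatFunc ℚ) r.denom :=
    (div_eq_iff hd).mp (RatFunc.num_div_denom r)
  have key : r.num * r.num = p * (r.denom * r.denom) := by
    apply RatFunc.algebraMap_injective ℚ
    rw [map_mul, map_mul, map_mul, hnum, hr]
    ring
  have keval := congrArg (Polynomial.eval a) key
  simp only [eval_mul] at keval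
  have h1 : r.num.eval a = 0 := by
    nlinarith [mul_self_nonneg (r.num.eval a), mul_self_nonneg (r.denom.eval a)]
  have h2 : r.denom.eval a = 0 := by
    have : r.denom.eval a * r.denom.eval a = 0 := by nlinarith [mul_self_nonneg (r.denom.eval a)]
    exact mul_self_eq_zero.mp this
  have hz : r.num.eval a = 0 ∧ r.denom.eval a = 0 := ⟨h1, h2⟩
  obtain ⟨u, v, huv⟩ := r.isCoprime_num_denom
  have := congrArg (Polynomial.eval a) huv
  simp [hz.1, hz.2] at this

lemma not_sq' (p : Polynomial ℚ) (f : RatFunc ℚ)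
    (hf : algebraMap (Polynomial ℚ) (RatFunc ℚ) p = f)
    (a : ℚ) (h : p.eval a < 0) : ¬ IsSquare f := by
  rw [← hf]; exact not_sq_of_neg_eval p a h

/-- In `(ℚ(t)*/ℚ(t)*²)²`, the element `(t(t+1), t(t-1))` is not in the `F₂`-span
of `v = (t, t(t-1)(t+3))` and `w = (t(t+1)(t-3), t)`: none of the four elements
`u`, `u·v`, `u·w`, `u·v·w` is a pair of squares in `ℚ(t)*`. -/
theorem stmt_5 (t : RatFunc ℚ) (ht : t = RatFunc.X) :
    ¬(IsSquare (t * (t + 1)) ∧ IsSquare (t * (t - 1))) ∧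
    ¬(IsSquare (t * (t + 1) * t) ∧
        IsSquare (t * (t - 1) * (t * (t - 1) * (t + 3)))) ∧
    ¬(IsSquare (t * (t + 1) * (t * (t + 1) * (t - 3))) ∧
        IsSquare (t * (t - 1) * t)) ∧
    ¬(IsSquare (t * (t + 1) * t * (t * (t + 1) * (t - 3))) ∧
        IsSquare (t * (t - 1) * (t * (t - 1) * (t + 3)) * t)) := by
  subst ht
  refine ⟨fun h => ?_, fun h => ?_, fun h => ?_, fun h => ?_⟩
  · exact not_sq' (X * (X + 1)) _ (by simp only [map_mul, map_add, map_sub, map_one, map_ofNat, RatFunc.algebraMap_X]) (-1/2)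
      (by norm_num) h.1
  · exact not_sq' (X * (X + 1) * X) _ (by simp only [map_mul, map_add, map_sub, map_one, map_ofNat, RatFunc.algebraMap_X]) (-2)
      (by norm_num) h.1
  · exact not_sq' (X * (X - 1) * X) _ (by simp only [map_mul, map_add, map_sub, map_one, map_ofNat, RatFunc.algebraMap_X]) (-1)
      (by norm_num) h.2
  · exact not_sq' (X * (X + 1) * X * (X * (X + 1) * (X - 3))) _
      (by simp only [map_mul, map_add, map_sub, map_one, map_ofNat, RatFunc.algebraMap_X]) 1 (by norm_num) h.1
end

section
/- Let p(t) = 3(t-1)^3(t+3) and q(t) = 3(t+1)^3(t-3). The quaternion algebra class (-p(t), 6t(t+1)) + (-q(t), 6t(t-1)) ∈ Br(Q(t)) has trivial residue at every closed point of P¹ over Q; in particular, at each of the points t = -3, -1, 0, 1, 3, ∞, the tame symbol of the sum of the two quaternion symbols is a square in the residue field. -/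
open Polynomial

/-- The valuation of a rational function at the closed point of `𝐏¹_ℚ` given by
an irreducible polynomial `π`. -/
noncomputable def ordAt (π : Polynomial ℚ) (r : RatFunc ℚ) : ℤ :=
  (multiplicity π r.num : ℤ) - multiplicity π r.denom

/-- The element `(-1)^{v(f)v(g)} f^{v(g)} g^{-v(f)}` whose residue at `π` is the
tame symbol `∂_π(f,g)`. -/
noncomputable def tameElemAt (π : Polynomial ℚ) (f g : RatFunc ℚ) : RatFunc ℚ :=
  (-1) ^ (ordAt π f * ordAt π g) * f ^ ordAt π g * g ^ (-(ordAt π f))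

/-- The residue at `π` of a rational function `r` with `ordAt π r = 0`, namely
`[r.num]/[r.denom]` in the residue field `ℚ[t]/(π)`, is a square in that field.
(In a field, `a/b` is a square iff `a·b` is.) -/
def ResIsSquareAt (π : Polynomial ℚ) (r : RatFunc ℚ) : Prop :=
  IsSquare (Ideal.Quotient.mk (Ideal.span {π}) (r.num * r.denom))

/-- The valuation at the point `t = ∞` of `𝐏¹_ℚ`. -/
noncomputable def ordInf (r : RatFunc ℚ) : ℤ :=
  (r.denom.natDegree : ℤ) - r.num.natDegree

/-- The element whose residue at `t = ∞` is the tame symbol `∂_∞(f,g)`. -/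
noncomputable def tameElemInf (f g : RatFunc ℚ) : RatFunc ℚ :=
  (-1) ^ (ordInf f * ordInf g) * f ^ ordInf g * g ^ (-(ordInf f))

/-- The residue at `t = ∞` of `r` with `ordInf r = 0`, namely the ratio of the
leading coefficients of `r.num` and `r.denom`, is a square in the residue
field `ℚ`. -/
def ResIsSquareInf (r : RatFunc ℚ) : Prop :=
  IsSquare (r.num.leadingCoeff * r.denom.leadingCoeff)

/-!
At a closed point `π`, write each of the four functions `-p, 6t(t+1), -q, 6t(t-1)` as a power
of `π` times a `π`-unit. The powers of `π` cancel in `f^{v(g)} g^{-v(f)}`, so each tame symbol is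
an explicit quotient of `π`-units and its residue can be read off in `ℚ[t]/(π)`. All four
functions are units away from `t = -3, -1, 0, 1, 3`, so there both symbols are trivial; at each
of these five points, and at `∞` (via degrees and leading coefficients), the product of the two
residues is an explicit nonzero rational square.
-/

theorem isSquare_mul_of_mul_eq_mul {K : Type*} [Field K] {a b n d : K} (hb : b ≠ 0)
    (h : a * d = n * b) (hab : IsSquare (a * b)) : IsSquare (n * d) := by
  obtain ⟨s, hs⟩ := hab
  refine ⟨s * d / b, ?_⟩
  field_simp
  linear_combination (-(d * b)) * h + d ^ 2 * hs

theorem multiplicity_pow_mul_of_not_dvd {M : Type*} [CommMonoidWithZero M] [IsCancelMulZero M]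
    {π u : M} (hπ : π ≠ 0) (hu : ¬π ∣ u) (m : ℕ) : multiplicity π (π ^ m * u) = m :=
  multiplicity_eq_of_dvd_of_not_dvd (dvd_mul_right _ _) fun h => hu <| by
    rwa [pow_succ, mul_dvd_mul_iff_left (pow_ne_zero m hπ)] at h

theorem isSquare_mk_span_X_sub_C_of_isSquare_eval {R : Type*} [CommRing R] {α : R} {P : R[X]}
    (h : IsSquare (P.eval α)) : IsSquare (Ideal.Quotient.mk (Ideal.span {X - C α}) P) := by
  simpa [← quotientSpanXSubCAlgEquiv_mk] using h.map (quotientSpanXSubCAlgEquiv α).symm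

theorem exists_mem_associated_X_sub_C_of_dvd {K : Type*} [Field K] {π : K[X]} (hπ : Prime π)
    {c : K} (hc : c ≠ 0) {s : Multiset K} (h : π ∣ C c * (s.map fun a => X - C a).prod) :
    ∃ a ∈ s, Associated π (X - C a) := by
  obtain ⟨a, ha, hdvd⟩ :=
    hπ.exists_mem_multiset_map_dvd ((isUnit_C.mpr hc.isUnit).dvd_mul_left.mp h)
  exact ⟨a, ha, hπ.irreducible.associated_of_dvd (irreducible_X_sub_C a) hdvd⟩

theorem ordAt_algebraMap {π : ℚ[X]} (hπ : ¬IsUnit π) (P : ℚ[X]) :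
    ordAt π (algebraMap _ _ P) = multiplicity π P := by
  simp [ordAt, multiplicity_eq_zero.mpr fun h => hπ (isUnit_of_dvd_one h)]

theorem ordAt_algebraMap_pow_mul {π u : ℚ[X]} (hπ : Irreducible π) (hu : ¬π ∣ u) (m : ℕ) :
    ordAt π (algebraMap _ _ (π ^ m * u)) = m := by
  rw [ordAt_algebraMap hπ.not_isUnit, multiplicity_pow_mul_of_not_dvd hπ.ne_zero hu]

theorem ordAt_algebraMap_of_not_dvd {π P : ℚ[X]} (hπ : Irreducible π) (hP : ¬π ∣ P) :
    ordAt π (algebraMap _ _ P) = 0 := by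
  simpa using ordAt_algebraMap_pow_mul hπ hP 0

theorem ordAt_eq_of_associated {π π' : ℚ[X]} (h : Associated π π') :
    ordAt π = ordAt π' := by
  funext r
  simp only [ordAt, multiplicity_eq_of_associated_left h]

theorem tameElemAt_eq_of_associated {π π' : ℚ[X]} (h : Associated π π') :
    tameElemAt π = tameElemAt π' := by
  funext f g
  simp only [tameElemAt, ordAt_eq_of_associated h]

theorem ResIsSquareAt.of_associated {π π' : ℚ[X]} {r : RatFunc ℚ} (h : Associated π π')
    (hr : ResIsSquareAt π' r) : ResIsSquareAt π r := by
  simpa [ResIsSquareAt] using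
    hr.map (Ideal.quotEquivOfEq (Ideal.span_singleton_eq_span_singleton.mpr h.symm))

theorem resIsSquareAt_one (π : ℚ[X]) : ResIsSquareAt π 1 := by
  simp [ResIsSquareAt]

theorem tameElemAt_eq_one_of_ordAt_eq_zero {π : ℚ[X]} {f g : RatFunc ℚ} (hf : ordAt π f = 0)
    (hg : ordAt π g = 0) : tameElemAt π f g = 1 := by
  simp [tameElemAt, hf, hg]

theorem tameElemAt_algebraMap_pow_mul {π u v : ℚ[X]} (hπ : Irreducible π) (hu : ¬π ∣ u)
    (hv : ¬π ∣ v) (m n : ℕ) :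
    tameElemAt π (algebraMap _ _ (π ^ m * u)) (algebraMap _ _ (π ^ n * v)) =
      (-1) ^ (m * n) * algebraMap _ _ u ^ n / algebraMap _ _ v ^ m := by
  have hπ0 : algebraMap _ (RatFunc ℚ) π ≠ 0 := RatFunc.algebraMap_ne_zero hπ.ne_zero
  rw [tameElemAt, ordAt_algebraMap_pow_mul hπ hu, ordAt_algebraMap_pow_mul hπ hv,
    ← Nat.cast_mul, zpow_natCast, zpow_natCast, zpow_neg, zpow_natCast]
  simp only [map_mul, map_pow, mul_pow, ← pow_mul, mul_comm n m]
  field_simp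

theorem resIsSquareAt_div {π a b : ℚ[X]} (hπ : Irreducible π) (hb : ¬π ∣ b)
    (hab : IsSquare (Ideal.Quotient.mk (Ideal.span {π}) (a * b))) :
    ResIsSquareAt π (algebraMap _ _ a / algebraMap _ _ b) := by
  have := PrincipalIdealRing.isMaximal_of_irreducible hπ
  let := Ideal.Quotient.field (Ideal.span {π})
  have hb0 : b ≠ 0 := fun h => hb (h ▸ dvd_zero π)
  have hrepr := (RatFunc.num_mul_eq_mul_denom_iff
    (x := algebraMap _ _ a / algebraMap _ _ b) hb0).mpr rfl
  rw [ResIsSquareAt, map_mul]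
  rw [map_mul] at hab
  refine isSquare_mul_of_mul_eq_mul ?_ (by rw [← map_mul, ← map_mul, hrepr]) hab
  rwa [Ne, Ideal.Quotient.eq_zero_iff_mem, Ideal.mem_span_singleton]

theorem resIsSquareAt_tameElemAt_mul_tameElemAt {π u₁ v₁ u₂ v₂ : ℚ[X]} (hπ : Irreducible π)
    (hu₁ : ¬π ∣ u₁) (hv₁ : ¬π ∣ v₁) (hu₂ : ¬π ∣ u₂) (hv₂ : ¬π ∣ v₂) (m₁ n₁ m₂ n₂ : ℕ)
    (hsq : IsSquare (Ideal.Quotient.mk (Ideal.span {π})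
      ((-1) ^ (m₁ * n₁ + m₂ * n₂) * u₁ ^ n₁ * v₁ ^ m₁ * u₂ ^ n₂ * v₂ ^ m₂))) :
    ResIsSquareAt π
      (tameElemAt π (algebraMap _ _ (π ^ m₁ * u₁)) (algebraMap _ _ (π ^ n₁ * v₁)) *
        tameElemAt π (algebraMap _ _ (π ^ m₂ * u₂)) (algebraMap _ _ (π ^ n₂ * v₂))) := by
  have hprime := hπ.prime
  have hb : ¬π ∣ v₁ ^ m₁ * v₂ ^ m₂ := hprime.not_dvd_mul
    (mt hprime.dvd_of_dvd_pow hv₁) (mt hprime.dvd_of_dvd_pow hv₂)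
  rw [tameElemAt_algebraMap_pow_mul hπ hu₁ hv₁, tameElemAt_algebraMap_pow_mul hπ hu₂ hv₂]
  convert resIsSquareAt_div (a := (-1) ^ (m₁ * n₁ + m₂ * n₂) * u₁ ^ n₁ * u₂ ^ n₂) hπ hb
    (by convert hsq using 2; ring) using 1
  simp only [map_mul, map_pow, map_neg, map_one]
  ring

theorem resIsSquareAt_X_sub_C_tameElemAt_mul_tameElemAt {α : ℚ}
    {f₁ g₁ f₂ g₂ u₁ v₁ u₂ v₂ : ℚ[X]} {m₁ n₁ m₂ n₂ : ℕ}
    (hf₁ : f₁ = (X - C α) ^ m₁ * u₁) (hg₁ : g₁ = (X - C α) ^ n₁ * v₁)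
    (hf₂ : f₂ = (X - C α) ^ m₂ * u₂) (hg₂ : g₂ = (X - C α) ^ n₂ * v₂)
    (hu₁ : u₁.eval α ≠ 0) (hv₁ : v₁.eval α ≠ 0) (hu₂ : u₂.eval α ≠ 0) (hv₂ : v₂.eval α ≠ 0)
    (hsq : IsSquare ((-1) ^ (m₁ * n₁ + m₂ * n₂) *
      u₁.eval α ^ n₁ * v₁.eval α ^ m₁ * u₂.eval α ^ n₂ * v₂.eval α ^ m₂)) :
    ResIsSquareAt (X - C α)
      (tameElemAt (X - C α) (algebraMap _ _ f₁) (algebraMap _ _ g₁) *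
        tameElemAt (X - C α) (algebraMap _ _ f₂) (algebraMap _ _ g₂)) := by
  subst hf₁ hg₁ hf₂ hg₂
  exact resIsSquareAt_tameElemAt_mul_tameElemAt (irreducible_X_sub_C α)
    (mt dvd_iff_isRoot.mp hu₁) (mt dvd_iff_isRoot.mp hv₁) (mt dvd_iff_isRoot.mp hu₂)
    (mt dvd_iff_isRoot.mp hv₂) _ _ _ _
    (isSquare_mk_span_X_sub_C_of_isSquare_eval (by simpa using hsq))

theorem ordInf_algebraMap (P : ℚ[X]) : ordInf (algebraMap _ _ P) = -P.natDegree := by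
  simp [ordInf]

theorem tameElemInf_algebraMap (f g : ℚ[X]) :
    tameElemInf (algebraMap _ _ f) (algebraMap _ _ g) =
      (-1) ^ (f.natDegree * g.natDegree) *
        algebraMap _ _ g ^ f.natDegree / algebraMap _ _ f ^ g.natDegree := by
  rw [tameElemInf, ordInf_algebraMap, ordInf_algebraMap, neg_mul_neg, ← Nat.cast_mul,
    zpow_natCast, neg_neg, zpow_natCast, zpow_neg, zpow_natCast, div_eq_mul_inv]
  ring

theorem resIsSquareInf_div {a b : ℚ[X]} (hb : b ≠ 0)
    (hab : IsSquare (a.leadingCoeff * b.leadingCoeff)) :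
    ResIsSquareInf (algebraMap _ _ a / algebraMap _ _ b) := by
  have hrepr := (RatFunc.num_mul_eq_mul_denom_iff
    (x := algebraMap _ _ a / algebraMap _ _ b) hb).mpr rfl
  refine isSquare_mul_of_mul_eq_mul (leadingCoeff_ne_zero.mpr hb) ?_ hab
  rw [← leadingCoeff_mul, ← leadingCoeff_mul, hrepr]

theorem resIsSquareInf_tameElemInf_mul_tameElemInf {f₁ g₁ f₂ g₂ : ℚ[X]} (hf₁ : f₁ ≠ 0)
    (hf₂ : f₂ ≠ 0)
    (hsq : IsSquare ((-1) ^ (f₁.natDegree * g₁.natDegree + f₂.natDegree * g₂.natDegree) *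
      g₁.leadingCoeff ^ f₁.natDegree * f₁.leadingCoeff ^ g₁.natDegree *
      g₂.leadingCoeff ^ f₂.natDegree * f₂.leadingCoeff ^ g₂.natDegree)) :
    ResIsSquareInf (tameElemInf (algebraMap _ _ f₁) (algebraMap _ _ g₁) *
      tameElemInf (algebraMap _ _ f₂) (algebraMap _ _ g₂)) := by
  rw [tameElemInf_algebraMap, tameElemInf_algebraMap]
  convert resIsSquareInf_div
    (a := (-1) ^ (f₁.natDegree * g₁.natDegree + f₂.natDegree * g₂.natDegree) *
      g₁ ^ f₁.natDegree * g₂ ^ f₂.natDegree)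
    (b := f₁ ^ g₁.natDegree * f₂ ^ g₂.natDegree)
    (mul_ne_zero (pow_ne_zero _ hf₁) (pow_ne_zero _ hf₂)) ?_ using 1
  · simp only [map_mul, map_pow, map_neg, map_one]
    ring
  · convert hsq using 1
    simp only [leadingCoeff_mul, leadingCoeff_pow, leadingCoeff_neg, leadingCoeff_one]
    ring

namespace BrauerExample

noncomputable def f₁ : ℚ[X] := -(3 * (X - 1) ^ 3 * (X + 3))
noncomputable def g₁ : ℚ[X] := 6 * X * (X + 1)
noncomputable def f₂ : ℚ[X] := -(3 * (X + 1) ^ 3 * (X - 3))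
noncomputable def g₂ : ℚ[X] := 6 * X * (X - 1)

noncomputable def tameProductAt (π : ℚ[X]) : RatFunc ℚ :=
  tameElemAt π (algebraMap _ _ f₁) (algebraMap _ _ g₁) *
    tameElemAt π (algebraMap _ _ f₂) (algebraMap _ _ g₂)

theorem resIsSquareAt_tameProductAt_neg_three :
    ResIsSquareAt (X - C (-3)) (tameProductAt (X - C (-3))) := by
  refine resIsSquareAt_X_sub_C_tameElemAt_mul_tameElemAt (m₁ := 1) (n₁ := 0) (m₂ := 0) (n₂ := 0)
    (u₁ := -(3 * (X - 1) ^ 3)) (v₁ := g₁) (u₂ := f₂) (v₂ := g₂)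
    ?_ ?_ ?_ ?_ ?_ ?_ ?_ ?_ ⟨6, ?_⟩ <;>
    norm_num [f₁, g₁, f₂, g₂, map_ofNat C]
  all_goals ring

theorem resIsSquareAt_tameProductAt_neg_one :
    ResIsSquareAt (X - C (-1)) (tameProductAt (X - C (-1))) := by
  refine resIsSquareAt_X_sub_C_tameElemAt_mul_tameElemAt (m₁ := 0) (n₁ := 1) (m₂ := 3) (n₂ := 0)
    (u₁ := f₁) (v₁ := 6 * X) (u₂ := -(3 * (X - 3))) (v₂ := g₂)
    ?_ ?_ ?_ ?_ ?_ ?_ ?_ ?_ ⟨288, ?_⟩ <;>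
    norm_num [f₁, g₁, f₂, g₂, map_ofNat C]
  all_goals ring

theorem resIsSquareAt_tameProductAt_zero : ResIsSquareAt (X - C 0) (tameProductAt (X - C 0)) := by
  refine resIsSquareAt_X_sub_C_tameElemAt_mul_tameElemAt (m₁ := 0) (n₁ := 1) (m₂ := 0) (n₂ := 1)
    (u₁ := f₁) (v₁ := 6 * (X + 1)) (u₂ := f₂) (v₂ := 6 * (X - 1))
    ?_ ?_ ?_ ?_ ?_ ?_ ?_ ?_ ⟨9, ?_⟩ <;>
    norm_num [f₁, g₁, f₂, g₂, map_ofNat C]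
  all_goals ring

theorem resIsSquareAt_tameProductAt_one : ResIsSquareAt (X - C 1) (tameProductAt (X - C 1)) := by
  refine resIsSquareAt_X_sub_C_tameElemAt_mul_tameElemAt (m₁ := 3) (n₁ := 0) (m₂ := 0) (n₂ := 1)
    (u₁ := -(3 * (X + 3))) (v₁ := g₁) (u₂ := f₂) (v₂ := 6 * X)
    ?_ ?_ ?_ ?_ ?_ ?_ ?_ ?_ ⟨288, ?_⟩ <;>
    norm_num [f₁, g₁, f₂, g₂, map_ofNat C]
  all_goals ring

theorem resIsSquareAt_tameProductAt_three : ResIsSquareAt (X - C 3) (tameProductAt (X - C 3)) := by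
  refine resIsSquareAt_X_sub_C_tameElemAt_mul_tameElemAt (m₁ := 0) (n₁ := 0) (m₂ := 1) (n₂ := 0)
    (u₁ := f₁) (v₁ := g₁) (u₂ := -(3 * (X + 1) ^ 3)) (v₂ := g₂)
    ?_ ?_ ?_ ?_ ?_ ?_ ?_ ?_ ⟨6, ?_⟩ <;>
    norm_num [f₁, g₁, f₂, g₂, map_ofNat C]
  all_goals ring

theorem resIsSquareAt_X_sub_C_tameProductAt {α : ℚ} (hα : α ∈ ({-3, -1, 0, 1, 3} : Set ℚ)) :
    ResIsSquareAt (X - C α) (tameProductAt (X - C α)) := by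
  rcases hα with rfl | rfl | rfl | rfl | rfl
  exacts [resIsSquareAt_tameProductAt_neg_three, resIsSquareAt_tameProductAt_neg_one,
    resIsSquareAt_tameProductAt_zero, resIsSquareAt_tameProductAt_one,
    resIsSquareAt_tameProductAt_three]

theorem f₁_mul_g₁_mul_f₂_mul_g₂ : f₁ * g₁ * f₂ * g₂ = C 324 *
    (({1, 1, 1, -3, 0, -1, -1, -1, -1, 3, 0, 1} : Multiset ℚ).map fun a => X - C a).prod := by
  simp only [f₁, g₁, f₂, g₂, Multiset.insert_eq_cons, Multiset.map_cons, Multiset.prod_cons,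
    Multiset.map_singleton, Multiset.prod_singleton, map_neg, map_one, map_zero, map_ofNat]
  ring

theorem resIsSquareAt_tameProductAt {π : ℚ[X]} (hπ : Irreducible π) :
    ResIsSquareAt π (tameProductAt π) := by
  by_cases hπD : π ∣ f₁ * g₁ * f₂ * g₂
  · rw [f₁_mul_g₁_mul_f₂_mul_g₂] at hπD
    obtain ⟨α, hα, hassoc⟩ := exists_mem_associated_X_sub_C_of_dvd hπ.prime (by norm_num) hπD
    rw [tameProductAt, tameElemAt_eq_of_associated hassoc]
    refine (resIsSquareAt_X_sub_C_tameProductAt ?_).of_associated hassoc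
    simp only [Multiset.insert_eq_cons, Multiset.mem_cons, Multiset.mem_singleton] at hα
    simp only [Set.mem_insert_iff, Set.mem_singleton_iff]
    tauto
  · have hord : ∀ P, P ∣ f₁ * g₁ * f₂ * g₂ → ordAt π (algebraMap _ _ P) = 0 := fun P hP =>
      ordAt_algebraMap_of_not_dvd hπ fun h => hπD (h.trans hP)
    rw [tameProductAt,
      tameElemAt_eq_one_of_ordAt_eq_zero (hord f₁ ⟨g₁ * f₂ * g₂, by ring⟩)
        (hord g₁ ⟨f₁ * f₂ * g₂, by ring⟩),
      tameElemAt_eq_one_of_ordAt_eq_zero (hord f₂ ⟨f₁ * g₁ * g₂, by ring⟩)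
        (hord g₂ ⟨f₁ * g₁ * f₂, by ring⟩), one_mul]
    exact resIsSquareAt_one π

noncomputable def tameProductInf : RatFunc ℚ :=
  tameElemInf (algebraMap _ _ f₁) (algebraMap _ _ g₁) *
    tameElemInf (algebraMap _ _ f₂) (algebraMap _ _ g₂)

theorem resIsSquareInf_tameProductInf : ResIsSquareInf tameProductInf := by
  have hX₁ : (X + 1 : ℚ[X]).leadingCoeff = 1 := by simpa using leadingCoeff_X_add_C (1 : ℚ)
  have hX₂ : (X - 1 : ℚ[X]).leadingCoeff = 1 := by simpa using leadingCoeff_X_sub_C (1 : ℚ)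
  have hf₁ : f₁.natDegree = 4 := by rw [f₁, natDegree_neg]; compute_degree!
  have hg₁ : g₁.natDegree = 2 := by rw [g₁]; compute_degree!
  have hf₂ : f₂.natDegree = 4 := by rw [f₂, natDegree_neg]; compute_degree!
  have hg₂ : g₂.natDegree = 2 := by rw [g₂]; compute_degree!
  have lf₁ : f₁.leadingCoeff = -3 := by simp [f₁, leadingCoeff_mul, ← map_ofNat C, hX₂]
  have lg₁ : g₁.leadingCoeff = 6 := by simp [g₁, leadingCoeff_mul, ← map_ofNat C, hX₁]
  have lf₂ : f₂.leadingCoeff = -3 := by simp [f₂, leadingCoeff_mul, ← map_ofNat C, hX₁]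
  have lg₂ : g₂.leadingCoeff = 6 := by simp [g₂, leadingCoeff_mul, ← map_ofNat C, hX₂]
  refine resIsSquareInf_tameElemInf_mul_tameElemInf (ne_zero_of_natDegree_gt (n := 0) (by omega))
    (ne_zero_of_natDegree_gt (n := 0) (by omega)) ⟨11664, ?_⟩
  rw [hf₁, hg₁, hf₂, hg₂, lf₁, lg₁, lf₂, lg₂]
  norm_num

end BrauerExample

/-- With `p(t) = 3(t-1)³(t+3)` and `q(t) = 3(t+1)³(t-3)`, the class
`(-p, 6t(t+1)) + (-q, 6t(t-1)) ∈ Br(ℚ(t))` is unramified over `𝐏¹_ℚ`: its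
residue (the product of the two tame symbols) is trivial at every closed point
of `𝐏¹_ℚ`; in particular at `t = -3, -1, 0, 1, 3` and `t = ∞`. -/
theorem stmt_8 (t p q : RatFunc ℚ) (ht : t = RatFunc.X)
    (hp : p = 3 * (t - 1) ^ 3 * (t + 3))
    (hq : q = 3 * (t + 1) ^ 3 * (t - 3)) :
    (∀ π : Polynomial ℚ, Irreducible π →
      ResIsSquareAt π
        (tameElemAt π (-p) (6 * t * (t + 1)) * tameElemAt π (-q) (6 * t * (t - 1)))) ∧
    (∀ α : ℚ, α ∈ ({-3, -1, 0, 1, 3} : Set ℚ) →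
      ResIsSquareAt (X - C α)
        (tameElemAt (X - C α) (-p) (6 * t * (t + 1)) *
          tameElemAt (X - C α) (-q) (6 * t * (t - 1)))) ∧
    ResIsSquareInf
      (tameElemInf (-p) (6 * t * (t + 1)) * tameElemInf (-q) (6 * t * (t - 1))) := by
  open BrauerExample in
  have hf₁ : -p = algebraMap _ _ f₁ := by simp [f₁, hp, ht, map_ofNat]
  have hg₁ : 6 * t * (t + 1) = algebraMap _ _ g₁ := by simp [g₁, ht, map_ofNat]
  have hf₂ : -q = algebraMap _ _ f₂ := by simp [f₂, hq, ht, map_ofNat]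
  have hg₂ : 6 * t * (t - 1) = algebraMap _ _ g₂ := by simp [g₂, ht, map_ofNat]
  rw [hf₁, hg₁, hf₂, hg₂]
  exact ⟨fun π hπ => resIsSquareAt_tameProductAt hπ,
    fun α hα => resIsSquareAt_X_sub_C_tameProductAt hα, resIsSquareInf_tameProductInf⟩
end
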